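/- arXiv:quant-ph/0406139 — 5 statements merged into one kernel-verified Lean document; each statement's English description precedes it below -/
import Mathlib

section
/- For every density matrix ρ on ℂ^{d₁}⊗ℂ^{d₂} there exist source-operators of both types: a Hermitian matrix T₁₂₂ on ℂ^{d₁}⊗ℂ^{d₂}⊗ℂ^{d₂} whose partial traces over the second and over the third tensor factor both equal ρ, and a Hermitian matrix T₁₁₂ on ℂ^{d₁}⊗ℂ^{d₁}⊗ℂ^{d₂} whose partial traces over the first and over the second tensor factor both equal ρ. -/
open Matrix
open scoped Kronecker ComplexOrder

namespace BellPaper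

variable {α β γ : Type*} [Fintype α] [Fintype β] [Fintype γ]

/-- Partial trace over the first factor of a threefold tensor product. -/
noncomputable def ptr1 (T : Matrix ((α × β) × γ) ((α × β) × γ) ℂ) :
    Matrix (β × γ) (β × γ) ℂ :=
  fun p q => ∑ i : α, T ((i, p.1), p.2) ((i, q.1), q.2)

/-- Partial trace over the second factor of a threefold tensor product. -/
noncomputable def ptr2 (T : Matrix ((α × β) × γ) ((α × β) × γ) ℂ) :
    Matrix (α × γ) (α × γ) ℂ :=
  fun p q => ∑ j : β, T ((p.1, j), p.2) ((q.1, j), q.2)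

/-- Partial trace over the third factor of a threefold tensor product. -/
noncomputable def ptr3 (T : Matrix ((α × β) × γ) ((α × β) × γ) ℂ) :
    Matrix (α × β) (α × β) ℂ :=
  fun p q => ∑ k : γ, T (p, k) (q, k)

/-- Partial trace over the second factor of a twofold tensor product. -/
noncomputable def ptrB (M : Matrix (α × β) (α × β) ℂ) : Matrix α α ℂ :=
  fun i i' => ∑ j : β, M (i, j) (i', j)

/-- A density matrix: positive semidefinite with unit trace. -/
def IsDensityMatrix {n : Type*} [Fintype n] (ρ : Matrix n n ℂ) : Prop :=
  ρ.PosSemidef ∧ ρ.trace = 1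

/-- Source-operator of type `T₁₂₂` for a state on ℂ^{d₁}⊗ℂ^{d₂}. -/
def IsSource122 {d₁ d₂ : ℕ} (ρ : Matrix (Fin d₁ × Fin d₂) (Fin d₁ × Fin d₂) ℂ)
    (T : Matrix ((Fin d₁ × Fin d₂) × Fin d₂) ((Fin d₁ × Fin d₂) × Fin d₂) ℂ) : Prop :=
  T.IsHermitian ∧ ptr2 T = ρ ∧ ptr3 T = ρ

/-- Source-operator of type `T₁₁₂` for a state on ℂ^{d₁}⊗ℂ^{d₂}. -/
def IsSource112 {d₁ d₂ : ℕ} (ρ : Matrix (Fin d₁ × Fin d₂) (Fin d₁ × Fin d₂) ℂ)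
    (S : Matrix ((Fin d₁ × Fin d₁) × Fin d₂) ((Fin d₁ × Fin d₁) × Fin d₂) ℂ) : Prop :=
  S.IsHermitian ∧ ptr1 S = ρ ∧ ptr2 S = ρ

/-- A DSO state: a density matrix admitting a positive semidefinite source-operator. -/
def IsDSO {d₁ d₂ : ℕ} (ρ : Matrix (Fin d₁ × Fin d₂) (Fin d₁ × Fin d₂) ℂ) : Prop :=
  IsDensityMatrix ρ ∧
    ((∃ T, T.PosSemidef ∧ IsSource122 ρ T) ∨ (∃ S, S.PosSemidef ∧ IsSource112 ρ S))

/-- A Bell class state: a density matrix admitting a density source-operator with the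
special dilation property (all three partial traces equal the state). -/
def IsBellClass {d : ℕ} (ρ : Matrix (Fin d × Fin d) (Fin d × Fin d) ℂ) : Prop :=
  IsDensityMatrix ρ ∧
    ∃ T : Matrix ((Fin d × Fin d) × Fin d) ((Fin d × Fin d) × Fin d) ℂ,
      T.PosSemidef ∧ ptr1 T = ρ ∧ ptr2 T = ρ ∧ ptr3 T = ρ

/-- The operator (spectral) norm of a matrix acting on a Euclidean space. -/
noncomputable def opNorm {n : Type*} [Fintype n] [DecidableEq n] (W : Matrix n n ℂ) : ℝ :=
  ‖Matrix.toEuclideanCLM (𝕜 := ℂ) W‖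

/-- The swap (permutation) operator `V_d` on ℂ^d ⊗ ℂ^d. -/
noncomputable def swapMat (d : ℕ) : Matrix (Fin d × Fin d) (Fin d × Fin d) ℂ :=
  fun p q => if p.1 = q.2 ∧ p.2 = q.1 then 1 else 0

/-- The Werner state on ℂ^d ⊗ ℂ^d. -/
noncomputable def werner (d : ℕ) : Matrix (Fin d × Fin d) (Fin d × Fin d) ℂ :=
  (((d : ℂ) + 1) / (d : ℂ) ^ 3) • (1 : Matrix (Fin d × Fin d) (Fin d × Fin d) ℂ)
    - ((d : ℂ) ^ 2)⁻¹ • swapMat d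

/-- The triple of indices of a point of the threefold product. -/
def triple {d : ℕ} (p : (Fin d × Fin d) × Fin d) : Fin 3 → Fin d := ![p.1.1, p.1.2, p.2]

/-- The unitary permuting the three tensor factors of ℂ^d ⊗ ℂ^d ⊗ ℂ^d according to π. -/
noncomputable def permMat (d : ℕ) (π : Equiv.Perm (Fin 3)) :
    Matrix ((Fin d × Fin d) × Fin d) ((Fin d × Fin d) × Fin d) ℂ :=
  fun p q => if ∀ i, triple p (π i) = triple q i then 1 else 0

/-- The antisymmetrization projection `Q_d^{(-)}` on ℂ^d ⊗ ℂ^d ⊗ ℂ^d. -/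
noncomputable def antisym (d : ℕ) :
    Matrix ((Fin d × Fin d) × Fin d) ((Fin d × Fin d) × Fin d) ℂ :=
  (6 : ℂ)⁻¹ • ∑ π : Equiv.Perm (Fin 3), (((Equiv.Perm.sign π : ℤ) : ℂ)) • permMat d π

/-- Tensor product of two vectors. -/
def tens {m n : Type*} (u : m → ℂ) (v : n → ℂ) : m × n → ℂ := fun p => u p.1 * v p.2

/-- The rank-one operator |v⟩⟨v|. -/
noncomputable def outer {n : Type*} (v : n → ℂ) : Matrix n n ℂ :=
  Matrix.vecMulVec v (star v)


/-- Auxiliary source operator of type `T₁₂₂`. -/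
noncomputable def T122aux {d₁ d₂ : ℕ} (ρ : Matrix (Fin d₁ × Fin d₂) (Fin d₁ × Fin d₂) ℂ) :
    Matrix ((Fin d₁ × Fin d₂) × Fin d₂) ((Fin d₁ × Fin d₂) × Fin d₂) ℂ :=
  fun p q =>
    (d₂ : ℂ)⁻¹ * ((if p.2 = q.2 then 1 else 0) * ρ p.1 q.1
      + (if p.1.2 = q.1.2 then 1 else 0) * ρ (p.1.1, p.2) (q.1.1, q.2))
    - (d₂ : ℂ)⁻¹ * (d₂ : ℂ)⁻¹ * (if p.1.2 = q.1.2 then (1:ℂ) else 0)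
        * (if p.2 = q.2 then (1:ℂ) else 0) * ∑ j, ρ (p.1.1, j) (q.1.1, j)

/-- Auxiliary source operator of type `T₁₁₂`. -/
noncomputable def S112aux {d₁ d₂ : ℕ} (ρ : Matrix (Fin d₁ × Fin d₂) (Fin d₁ × Fin d₂) ℂ) :
    Matrix ((Fin d₁ × Fin d₁) × Fin d₂) ((Fin d₁ × Fin d₁) × Fin d₂) ℂ :=
  fun p q =>
    (d₁ : ℂ)⁻¹ * ((if p.1.2 = q.1.2 then 1 else 0) * ρ (p.1.1, p.2) (q.1.1, q.2)
      + (if p.1.1 = q.1.1 then 1 else 0) * ρ (p.1.2, p.2) (q.1.2, q.2))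
    - (d₁ : ℂ)⁻¹ * (d₁ : ℂ)⁻¹ * (if p.1.1 = q.1.1 then (1:ℂ) else 0)
        * (if p.1.2 = q.1.2 then (1:ℂ) else 0) * ∑ i, ρ (i, p.2) (i, q.2)

/-- For every density matrix ρ on ℂ^{d₁}⊗ℂ^{d₂} there exist source-operators
of both types `T₁₂₂` and `T₁₁₂`. -/
theorem source_operators_exist {d₁ d₂ : ℕ}
    (ρ : Matrix (Fin d₁ × Fin d₂) (Fin d₁ × Fin d₂) ℂ) (hρ : IsDensityMatrix ρ) :
    (∃ T, IsSource122 ρ T) ∧ (∃ S, IsSource112 ρ S) := by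
  obtain ⟨hpsd, htr⟩ := hρ
  have hH := hpsd.1
  have hd₁ : (d₁ : ℂ) ≠ 0 := by
    rintro h
    have : d₁ = 0 := by exact_mod_cast h
    subst this
    simp [Matrix.trace, Fintype.sum_prod_type] at htr
  have hd₂ : (d₂ : ℂ) ≠ 0 := by
    rintro h
    have : d₂ = 0 := by exact_mod_cast h
    subst this
    simp [Matrix.trace, Fintype.sum_prod_type] at htr
  constructor
  · refine ⟨T122aux ρ, ?_, ?_, ?_⟩
    · ext p q
      have e1 : (if q.2 = p.2 then (1:ℂ) else 0) = (if p.2 = q.2 then 1 else 0) := by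
        simp [eq_comm]
      have e2 : (if q.1.2 = p.1.2 then (1:ℂ) else 0) = (if p.1.2 = q.1.2 then 1 else 0) := by
        simp [eq_comm]
      simp only [Matrix.conjTranspose_apply, T122aux, star_sub, star_add, star_mul',
        apply_ite (star : ℂ → ℂ), star_one, star_zero, star_sum, star_inv₀, star_natCast,
        e1, e2, hH.apply]
    · ext p q
      show (∑ j, T122aux ρ ((p.1, j), p.2) ((q.1, j), q.2)) = ρ p q
      have expand : ∀ j : Fin d₂, T122aux ρ ((p.1, j), p.2) ((q.1, j), q.2)
          = (d₂:ℂ)⁻¹ * (if p.2 = q.2 then (1:ℂ) else 0) * ρ (p.1, j) (q.1, j)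
            + ((d₂:ℂ)⁻¹ * ρ (p.1, p.2) (q.1, q.2)
              - (d₂:ℂ)⁻¹ * (d₂:ℂ)⁻¹ * (if p.2 = q.2 then (1:ℂ) else 0)
                * ∑ j', ρ (p.1, j') (q.1, j')) := by
        intro j
        simp only [T122aux, eq_self_iff_true, if_true]
        ring
      rw [Finset.sum_congr rfl fun j _ => expand j, Finset.sum_add_distrib, ← Finset.mul_sum,
        Finset.sum_const, Finset.card_univ, Fintype.card_fin, nsmul_eq_mul]
      set δ := (if p.2 = q.2 then (1:ℂ) else 0) with hδ
      field_simp
      ring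
    · ext p q
      show (∑ k, T122aux ρ (p, k) (q, k)) = ρ p q
      have expand : ∀ k : Fin d₂, T122aux ρ (p, k) (q, k)
          = (d₂:ℂ)⁻¹ * (if p.2 = q.2 then (1:ℂ) else 0) * ρ (p.1, k) (q.1, k)
            + ((d₂:ℂ)⁻¹ * ρ p q
              - (d₂:ℂ)⁻¹ * (d₂:ℂ)⁻¹ * (if p.2 = q.2 then (1:ℂ) else 0)
                * ∑ j', ρ (p.1, j') (q.1, j')) := by
        intro k
        simp only [T122aux, eq_self_iff_true, if_true]
        ring
      rw [Finset.sum_congr rfl fun k _ => expand k, Finset.sum_add_distrib, ← Finset.mul_sum,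
        Finset.sum_const, Finset.card_univ, Fintype.card_fin, nsmul_eq_mul]
      set δ := (if p.2 = q.2 then (1:ℂ) else 0) with hδ
      field_simp
      ring
  · refine ⟨S112aux ρ, ?_, ?_, ?_⟩
    · ext p q
      have e1 : (if q.1.2 = p.1.2 then (1:ℂ) else 0) = (if p.1.2 = q.1.2 then 1 else 0) := by
        simp [eq_comm]
      have e2 : (if q.1.1 = p.1.1 then (1:ℂ) else 0) = (if p.1.1 = q.1.1 then 1 else 0) := by
        simp [eq_comm]
      simp only [Matrix.conjTranspose_apply, S112aux, star_sub, star_add, star_mul',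
        apply_ite (star : ℂ → ℂ), star_one, star_zero, star_sum, star_inv₀, star_natCast,
        e1, e2, hH.apply]
    · ext p q
      show (∑ i, S112aux ρ ((i, p.1), p.2) ((i, q.1), q.2)) = ρ p q
      have expand : ∀ i : Fin d₁, S112aux ρ ((i, p.1), p.2) ((i, q.1), q.2)
          = (d₁:ℂ)⁻¹ * (if p.1 = q.1 then (1:ℂ) else 0) * ρ (i, p.2) (i, q.2)
            + ((d₁:ℂ)⁻¹ * ρ (p.1, p.2) (q.1, q.2)
              - (d₁:ℂ)⁻¹ * (d₁:ℂ)⁻¹ * (if p.1 = q.1 then (1:ℂ) else 0)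
                * ∑ i', ρ (i', p.2) (i', q.2)) := by
        intro i
        simp only [S112aux, eq_self_iff_true, if_true]
        ring
      rw [Finset.sum_congr rfl fun i _ => expand i, Finset.sum_add_distrib, ← Finset.mul_sum,
        Finset.sum_const, Finset.card_univ, Fintype.card_fin, nsmul_eq_mul]
      set δ := (if p.1 = q.1 then (1:ℂ) else 0) with hδ
      field_simp
      ring
    · ext p q
      show (∑ j, S112aux ρ ((p.1, j), p.2) ((q.1, j), q.2)) = ρ p q
      have expand : ∀ j : Fin d₁, S112aux ρ ((p.1, j), p.2) ((q.1, j), q.2)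
          = (d₁:ℂ)⁻¹ * (if p.1 = q.1 then (1:ℂ) else 0) * ρ (j, p.2) (j, q.2)
            + ((d₁:ℂ)⁻¹ * ρ (p.1, p.2) (q.1, q.2)
              - (d₁:ℂ)⁻¹ * (d₁:ℂ)⁻¹ * (if p.1 = q.1 then (1:ℂ) else 0)
                * ∑ i', ρ (i', p.2) (i', q.2)) := by
        intro j
        simp only [S112aux, eq_self_iff_true, if_true]
        ring
      rw [Finset.sum_congr rfl fun j _ => expand j, Finset.sum_add_distrib, ← Finset.mul_sum,
        Finset.sum_const, Finset.card_univ, Fintype.card_fin, nsmul_eq_mul]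
      set δ := (if p.1 = q.1 then (1:ℂ) else 0) with hδ
      field_simp
      ring

end BellPaper
end

section
/- Let ρ be a density matrix on ℂ^{d₁}⊗ℂ^{d₂}, with blocks ρ_{nm} (each ρ_{nm} a d₁×d₁ matrix) so that ρ = Σ_{n,m} ρ_{nm} ⊗ E_{nm}, where E_{nm} = |n⟩⟨m| in the standard basis of ℂ^{d₂}. Then for every density matrix σ on ℂ^{d₂} and every Hermitian matrix τ on ℂ^{d₁}⊗ℂ^{d₂}⊗ℂ^{d₂} whose partial traces over the second and the third tensor factor are both zero, the matrix T = Σ_{n,m} ρ_{nm} ⊗ E_{nm} ⊗ σ + Σ_{n,m} ρ_{nm} ⊗ σ ⊗ E_{nm} − (tr^{(2)}ρ) ⊗ σ ⊗ σ + τ is Hermitian and its partial traces over the second and over the third tensor factor both equal ρ (here tr^{(2)}ρ is the reduced density matrix of ρ on ℂ^{d₁}). -/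
open Matrix
open scoped Kronecker ComplexOrder

/-!
The second summand of `T` is the first one with the last two tensor factors exchanged, so
one partial trace of each is `ρ` (as `tr σ = 1`) and the other is `tr₂ρ ⊗ σ`; the third
summand has both partial traces equal to `tr₂ρ ⊗ σ` and cancels the latter, while `τ`
contributes nothing.
-/

namespace Matrix

variable {ι l m n n' l' R : Type*}

theorem sum_kronecker [NonUnitalNonAssocSemiring R] (s : Finset ι) (A : ι → Matrix l m R)
    (B : Matrix n n' R) : (∑ i ∈ s, A i) ⊗ₖ B = ∑ i ∈ s, A i ⊗ₖ B := by
  ext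
  simp only [kroneckerMap_apply, sum_apply, Finset.sum_mul]

theorem submatrix_sum [AddCommMonoid R] (s : Finset ι) (A : ι → Matrix m n R) (f : l → m)
    (g : l' → n) : (∑ i ∈ s, A i).submatrix f g = ∑ i ∈ s, (A i).submatrix f g := by
  ext
  simp only [submatrix_apply, sum_apply]

theorem IsHermitian.kronecker [CommMagma R] [StarMul R] {A : Matrix m m R} {B : Matrix n n R}
    (hA : A.IsHermitian) (hB : B.IsHermitian) : (A ⊗ₖ B).IsHermitian := by
  rw [IsHermitian, conjTranspose_kronecker, hA.eq, hB.eq]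

end Matrix

namespace BellPaper

variable {α β γ : Type*}

def swap23 : (α × β) × γ → (α × γ) × β := fun p => ((p.1.1, p.2), p.1.2)

theorem kronecker_kronecker_eq_submatrix_swap23 {R l l' m m' n n' : Type*} [CommSemigroup R]
    (A : Matrix l l' R) (B : Matrix m m' R) (C : Matrix n n' R) :
    (A ⊗ₖ B) ⊗ₖ C = ((A ⊗ₖ C) ⊗ₖ B).submatrix swap23 swap23 := by
  ext
  simp only [kroneckerMap_apply, submatrix_apply, swap23, mul_right_comm]

theorem isHermitian_ptrB [Fintype β] {M : Matrix (α × β) (α × β) ℂ}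
    (hM : M.IsHermitian) : (ptrB M).IsHermitian := by
  ext i i'
  simp only [conjTranspose_apply, BellPaper.ptrB, star_sum, hM.apply]

theorem ptrB_kronecker [Fintype β] (A : Matrix α α ℂ) (B : Matrix β β ℂ) :
    ptrB (A ⊗ₖ B) = B.trace • A := by
  ext i i'
  simp only [BellPaper.ptrB, kroneckerMap_apply, Matrix.smul_apply, trace, diag_apply,
    smul_eq_mul, ← Finset.mul_sum, mul_comm]

theorem ptr2_add [Fintype β] (X Y : Matrix ((α × β) × γ) ((α × β) × γ) ℂ) :
    ptr2 (X + Y) = ptr2 X + ptr2 Y := by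
  ext
  simp only [ptr2, Matrix.add_apply, Finset.sum_add_distrib]

theorem ptr2_sub [Fintype β] (X Y : Matrix ((α × β) × γ) ((α × β) × γ) ℂ) :
    ptr2 (X - Y) = ptr2 X - ptr2 Y := by
  ext
  simp only [ptr2, Matrix.sub_apply, Finset.sum_sub_distrib]

theorem ptr3_add [Fintype γ] (X Y : Matrix ((α × β) × γ) ((α × β) × γ) ℂ) :
    ptr3 (X + Y) = ptr3 X + ptr3 Y := by
  ext
  simp only [ptr3, Matrix.add_apply, Finset.sum_add_distrib]

theorem ptr3_sub [Fintype γ] (X Y : Matrix ((α × β) × γ) ((α × β) × γ) ℂ) :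
    ptr3 (X - Y) = ptr3 X - ptr3 Y := by
  ext
  simp only [ptr3, Matrix.sub_apply, Finset.sum_sub_distrib]

theorem ptr2_submatrix_swap23 [Fintype β] (X : Matrix ((α × γ) × β) ((α × γ) × β) ℂ) :
    ptr2 (X.submatrix swap23 swap23) = ptr3 X :=
  rfl

theorem ptr3_submatrix_swap23 [Fintype γ] (X : Matrix ((α × γ) × β) ((α × γ) × β) ℂ) :
    ptr3 (X.submatrix swap23 swap23) = ptr2 X :=
  rfl

theorem ptr2_kronecker [Fintype β] (M : Matrix (α × β) (α × β) ℂ) (C : Matrix γ γ ℂ) :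
    ptr2 (M ⊗ₖ C) = ptrB M ⊗ₖ C := by
  ext
  simp only [ptr2, BellPaper.ptrB, kroneckerMap_apply, Finset.sum_mul]

theorem ptr3_kronecker [Fintype γ] (M : Matrix (α × β) (α × β) ℂ) (C : Matrix γ γ ℂ) :
    ptr3 (M ⊗ₖ C) = C.trace • M := by
  ext
  simp only [ptr3, kroneckerMap_apply, Matrix.smul_apply, trace, diag_apply, smul_eq_mul,
    ← Finset.mul_sum, mul_comm]

section SourceOperator

variable [Fintype β]

noncomputable def sourceOperator (ρ : Matrix (α × β) (α × β) ℂ) (σ : Matrix β β ℂ) :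
    Matrix ((α × β) × β) ((α × β) × β) ℂ :=
  ρ ⊗ₖ σ + (ρ ⊗ₖ σ).submatrix swap23 swap23 - (ptrB ρ ⊗ₖ σ) ⊗ₖ σ

theorem isHermitian_sourceOperator {ρ : Matrix (α × β) (α × β) ℂ} {σ : Matrix β β ℂ}
    (hρ : ρ.IsHermitian) (hσ : σ.IsHermitian) : (sourceOperator ρ σ).IsHermitian :=
  ((hρ.kronecker hσ).add ((hρ.kronecker hσ).submatrix swap23)).sub
    (((isHermitian_ptrB hρ).kronecker hσ).kronecker hσ)

theorem ptr2_sourceOperator (ρ : Matrix (α × β) (α × β) ℂ) {σ : Matrix β β ℂ}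
    (hσ : σ.trace = 1) : ptr2 (sourceOperator ρ σ) = ρ := by
  rw [sourceOperator, ptr2_sub, ptr2_add, ptr2_submatrix_swap23, ptr2_kronecker, ptr2_kronecker,
    ptr3_kronecker, ptrB_kronecker, hσ, one_smul, one_smul, add_sub_cancel_left]

theorem ptr3_sourceOperator (ρ : Matrix (α × β) (α × β) ℂ) {σ : Matrix β β ℂ}
    (hσ : σ.trace = 1) : ptr3 (sourceOperator ρ σ) = ρ := by
  rw [sourceOperator, ptr3_sub, ptr3_add, ptr3_submatrix_swap23, ptr3_kronecker, ptr3_kronecker,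
    ptr2_kronecker, hσ, one_smul, one_smul, add_sub_cancel_right]

end SourceOperator

/-- the explicit construction (7) yields a source-operator of type `T₁₂₂`. -/
theorem explicit_source_operator {d₁ d₂ : ℕ}
    (ρ : Matrix (Fin d₁ × Fin d₂) (Fin d₁ × Fin d₂) ℂ) (hρ : IsDensityMatrix ρ)
    (ρb : Fin d₂ → Fin d₂ → Matrix (Fin d₁) (Fin d₁) ℂ)
    (hρb : ρ = ∑ n : Fin d₂, ∑ m : Fin d₂, ρb n m ⊗ₖ Matrix.single n m (1 : ℂ))
    (σ : Matrix (Fin d₂) (Fin d₂) ℂ) (hσ : IsDensityMatrix σ)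
    (τ : Matrix ((Fin d₁ × Fin d₂) × Fin d₂) ((Fin d₁ × Fin d₂) × Fin d₂) ℂ)
    (hτ : τ.IsHermitian) (hτ2 : ptr2 τ = 0) (hτ3 : ptr3 τ = 0)
    (T : Matrix ((Fin d₁ × Fin d₂) × Fin d₂) ((Fin d₁ × Fin d₂) × Fin d₂) ℂ)
    (hT : T = (∑ n : Fin d₂, ∑ m : Fin d₂,
          (ρb n m ⊗ₖ Matrix.single n m (1 : ℂ)) ⊗ₖ σ)
        + (∑ n : Fin d₂, ∑ m : Fin d₂,
          (ρb n m ⊗ₖ σ) ⊗ₖ Matrix.single n m (1 : ℂ))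
        - (ptrB ρ ⊗ₖ σ) ⊗ₖ σ + τ) :
    T.IsHermitian ∧ ptr2 T = ρ ∧ ptr3 T = ρ := by
  have hblock : ∑ n : Fin d₂, ∑ m : Fin d₂, (ρb n m ⊗ₖ Matrix.single n m (1 : ℂ)) ⊗ₖ σ =
      ρ ⊗ₖ σ := by
    simp only [hρb, Matrix.sum_kronecker]
  have hswapped : ∑ n : Fin d₂, ∑ m : Fin d₂, (ρb n m ⊗ₖ σ) ⊗ₖ Matrix.single n m (1 : ℂ) =
      (ρ ⊗ₖ σ).submatrix swap23 swap23 := by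
    simp only [kronecker_kronecker_eq_submatrix_swap23 _ σ, ← Matrix.submatrix_sum, hblock]
  have hT' : T = sourceOperator ρ σ + τ := by
    rw [hT, hblock, hswapped, sourceOperator]
  subst hT'
  refine ⟨(isHermitian_sourceOperator hρ.1.1 hσ.1.1).add hτ, ?_, ?_⟩
  · rw [ptr2_add, ptr2_sourceOperator ρ hσ.2, hτ2, add_zero]
  · rw [ptr3_add, ptr3_sourceOperator ρ hσ.2, hτ3, add_zero]

end BellPaper
end

section
/- Let ψ₁, ψ₂ be an orthonormal basis of ℂ², Φ = ψ₁⊗ψ₁ + ψ₂⊗ψ₂, P_i = |ψ_i⟩⟨ψ_i|, and ρ₂ = (1/6)|Φ⟩⟨Φ| + (1/6)(P₁+P₂)⊗P₁ + (1/6)P₁⊗(P₁+P₂) on ℂ²⊗ℂ². Then with χ = ψ₁⊗ψ₁⊗ψ₁ + ψ₂⊗ψ₁⊗ψ₂ and χ' = ψ₁⊗ψ₁⊗ψ₁ + ψ₁⊗ψ₂⊗ψ₂, the matrix R = (1/6)|Φ⟩⟨Φ| ⊗ P₁ + (1/6)|χ⟩⟨χ| + (1/6)|χ'⟩⟨χ'|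 on ℂ²⊗ℂ²⊗ℂ² is positive semidefinite and its partial traces over each of the three tensor factors all equal ρ₂; consequently ρ₂ is a Bell class state. -/
/-!
`R` is `6⁻¹` times a sum of three operators `|v⟩⟨v|`, hence positive semidefinite, and its
trace is `6⁻¹ (‖Φ ⊗ ψ₁‖² + ‖χ‖² + ‖χ'‖²) = 1`. Expanding `R` bilinearly into operators
`|x⟩⟨y|` between product vectors, each partial trace multiplies such a term by the inner
product of the traced-out factors, so orthonormality of `ψ₁, ψ₂` leaves exactly the terms of
`ρ₂`. Since a partial trace is a sum of principal submatrices, `ρ₂ = ptr3 R` inherits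
positivity and unit trace from `R`.
-/

open Matrix
open scoped Kronecker ComplexOrder

namespace BellPaper

variable {α β γ : Type*} [Fintype α] [Fintype β] [Fintype γ]

noncomputable def ketBra {n : Type*} (u v : n → ℂ) : Matrix n n ℂ :=
  vecMulVec u (star v)

section Vectors

variable {m n : Type*}

lemma outer_eq_ketBra (v : n → ℂ) : outer v = ketBra v v := rfl

lemma ketBra_add_left (u u' v : n → ℂ) : ketBra (u + u') v = ketBra u v + ketBra u' v :=
  add_vecMulVec u u' (star v)

lemma ketBra_add_right (u v v' : n → ℂ) : ketBra u (v + v') = ketBra u v + ketBra u v' := by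
  rw [ketBra, star_add, vecMulVec_add]; rfl

lemma tens_add_left (u u' : m → ℂ) (v : n → ℂ) : tens (u + u') v = tens u v + tens u' v := by
  ext p; simp only [tens, Pi.add_apply, add_mul]

lemma ketBra_kronecker_ketBra (u v : m → ℂ) (a b : n → ℂ) :
    ketBra u v ⊗ₖ ketBra a b = ketBra (tens u a) (tens v b) := by
  ext p q
  simp only [ketBra, kroneckerMap_apply, vecMulVec_apply, tens, Pi.star_apply, star_mul']
  ring

variable [Fintype m] [Fintype n]

lemma star_tens_dotProduct_tens (u u' : m → ℂ) (v v' : n → ℂ) :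
    star (tens u v) ⬝ᵥ tens u' v' = (star u ⬝ᵥ u') * (star v ⬝ᵥ v') := by
  simp only [dotProduct, tens, Pi.star_apply, star_mul', Fintype.sum_prod_type,
    Finset.sum_mul_sum]
  exact Finset.sum_congr rfl fun i _ => Finset.sum_congr rfl fun j _ => by ring

end Vectors

section PartialTrace

variable {l m n : Type*}

lemma ptr1_add [Fintype l] (S T : Matrix ((l × m) × n) ((l × m) × n) ℂ) :
    ptr1 (S + T) = ptr1 S + ptr1 T := by
  ext p q; simp only [ptr1, Matrix.add_apply, Finset.sum_add_distrib]

lemma ptr2_add_s8 [Fintype m] (S T : Matrix ((l × m) × n) ((l × m) × n) ℂ) :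
    ptr2 (S + T) = ptr2 S + ptr2 T := by
  ext p q; simp only [ptr2, Matrix.add_apply, Finset.sum_add_distrib]

lemma ptr3_add_s8 [Fintype n] (S T : Matrix ((l × m) × n) ((l × m) × n) ℂ) :
    ptr3 (S + T) = ptr3 S + ptr3 T := by
  ext p q; simp only [ptr3, Matrix.add_apply, Finset.sum_add_distrib]

lemma ptr1_smul [Fintype l] (c : ℂ) (T : Matrix ((l × m) × n) ((l × m) × n) ℂ) :
    ptr1 (c • T) = c • ptr1 T := by
  ext p q; simp only [ptr1, Matrix.smul_apply, smul_eq_mul, Finset.mul_sum]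

lemma ptr2_smul [Fintype m] (c : ℂ) (T : Matrix ((l × m) × n) ((l × m) × n) ℂ) :
    ptr2 (c • T) = c • ptr2 T := by
  ext p q; simp only [ptr2, Matrix.smul_apply, smul_eq_mul, Finset.mul_sum]

lemma ptr3_smul [Fintype n] (c : ℂ) (T : Matrix ((l × m) × n) ((l × m) × n) ℂ) :
    ptr3 (c • T) = c • ptr3 T := by
  ext p q; simp only [ptr3, Matrix.smul_apply, smul_eq_mul, Finset.mul_sum]

lemma ptr1_ketBra_tens [Fintype l] (u u' : l → ℂ) (a a' : m → ℂ) (w w' : n → ℂ) :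
    ptr1 (ketBra (tens (tens u a) w) (tens (tens u' a') w'))
      = (star u' ⬝ᵥ u) • ketBra (tens a w) (tens a' w') := by
  ext p q
  simp only [ptr1, ketBra, vecMulVec_apply, tens, Pi.star_apply, star_mul', dotProduct,
    Matrix.smul_apply, smul_eq_mul, Finset.sum_mul]
  exact Finset.sum_congr rfl fun i _ => by ring

lemma ptr2_ketBra_tens [Fintype m] (u u' : l → ℂ) (a a' : m → ℂ) (w w' : n → ℂ) :
    ptr2 (ketBra (tens (tens u a) w) (tens (tens u' a') w'))
      = (star a' ⬝ᵥ a) • ketBra (tens u w) (tens u' w') := by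
  ext p q
  simp only [ptr2, ketBra, vecMulVec_apply, tens, Pi.star_apply, star_mul', dotProduct,
    Matrix.smul_apply, smul_eq_mul, Finset.sum_mul]
  exact Finset.sum_congr rfl fun i _ => by ring

lemma ptr3_ketBra_tens [Fintype n] (v v' : l × m → ℂ) (w w' : n → ℂ) :
    ptr3 (ketBra (tens v w) (tens v' w')) = (star w' ⬝ᵥ w) • ketBra v v' := by
  ext p q
  simp only [ptr3, ketBra, vecMulVec_apply, tens, Pi.star_apply, star_mul', dotProduct,
    Matrix.smul_apply, smul_eq_mul, Finset.sum_mul]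
  exact Finset.sum_congr rfl fun i _ => by ring

lemma ptr3_eq_sum_submatrix [Fintype n] (T : Matrix ((l × m) × n) ((l × m) × n) ℂ) :
    ptr3 T = ∑ k, T.submatrix (·, k) (·, k) := by
  ext p q; simp only [ptr3, Matrix.sum_apply, submatrix_apply]

lemma trace_ptr3 [Fintype l] [Fintype m] [Fintype n] (T : Matrix ((l × m) × n) ((l × m) × n) ℂ) :
    (ptr3 T).trace = T.trace := by
  simp only [trace, diag, ptr3, Fintype.sum_prod_type (f := fun p => T p p)]

lemma IsDensityMatrix.ptr3 [Fintype l] [Fintype m] [Fintype n]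
    {T : Matrix ((l × m) × n) ((l × m) × n) ℂ} (hT : IsDensityMatrix T) :
    IsDensityMatrix (ptr3 T) := by
  refine ⟨?_, (trace_ptr3 T).trans hT.2⟩
  rw [ptr3_eq_sum_submatrix]
  exact posSemidef_sum _ fun k _ => hT.1.submatrix _

end PartialTrace

/-- the state ρ₂ of (16) admits the density source-operator (18) with the
special dilation property, hence ρ₂ is a Bell class state. -/
theorem rho_two_isBellClass (ψ₁ ψ₂ : Fin 2 → ℂ)
    (h11 : star ψ₁ ⬝ᵥ ψ₁ = 1) (h22 : star ψ₂ ⬝ᵥ ψ₂ = 1) (h12 : star ψ₁ ⬝ᵥ ψ₂ = 0)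
    (Φ : Fin 2 × Fin 2 → ℂ) (hΦ : Φ = tens ψ₁ ψ₁ + tens ψ₂ ψ₂)
    (ρ₂ : Matrix (Fin 2 × Fin 2) (Fin 2 × Fin 2) ℂ)
    (hρ₂ : ρ₂ = (6 : ℂ)⁻¹ • outer Φ
        + (6 : ℂ)⁻¹ • ((outer ψ₁ + outer ψ₂) ⊗ₖ outer ψ₁)
        + (6 : ℂ)⁻¹ • (outer ψ₁ ⊗ₖ (outer ψ₁ + outer ψ₂)))
    (χ χ' : (Fin 2 × Fin 2) × Fin 2 → ℂ)
    (hχ : χ = tens (tens ψ₁ ψ₁) ψ₁ + tens (tens ψ₂ ψ₁) ψ₂)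
    (hχ' : χ' = tens (tens ψ₁ ψ₁) ψ₁ + tens (tens ψ₁ ψ₂) ψ₂)
    (R : Matrix ((Fin 2 × Fin 2) × Fin 2) ((Fin 2 × Fin 2) × Fin 2) ℂ)
    (hRdef : R = (6 : ℂ)⁻¹ • (outer Φ ⊗ₖ outer ψ₁)
        + (6 : ℂ)⁻¹ • outer χ + (6 : ℂ)⁻¹ • outer χ') :
    R.PosSemidef ∧ ptr1 R = ρ₂ ∧ ptr2 R = ρ₂ ∧ ptr3 R = ρ₂ ∧ IsBellClass ρ₂ := by
  have h21 : star ψ₂ ⬝ᵥ ψ₁ = 0 := by rw [star_dotProduct, h12, star_zero]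
  have hR : R = (6 : ℂ)⁻¹ • (outer (tens Φ ψ₁) + outer χ + outer χ') := by
    rw [hRdef, outer_eq_ketBra Φ, outer_eq_ketBra ψ₁, ketBra_kronecker_ketBra, smul_add,
      smul_add]
    rfl
  have hRpsd : R.PosSemidef := by
    rw [hR]
    refine PosSemidef.smul ?_ (by positivity)
    exact ((posSemidef_vecMulVec_self_star _).add (posSemidef_vecMulVec_self_star _)).add
      (posSemidef_vecMulVec_self_star _)
  have hRtr : R.trace = 1 := by
    rw [hR, hΦ, hχ, hχ']
    simp only [outer, trace_smul, trace_add, trace_vecMulVec, dotProduct_comm _ (star _),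
      tens_add_left, star_add, dotProduct_add, star_tens_dotProduct_tens,
      h11, h22, h12, h21, smul_eq_mul]
    norm_num
  have hptr : ptr1 R = ρ₂ ∧ ptr2 R = ρ₂ ∧ ptr3 R = ρ₂ := by
    subst hRdef hρ₂ hΦ hχ hχ'
    refine ⟨?_, ?_, ?_⟩ <;>
    · simp only [outer_eq_ketBra, ketBra_kronecker_ketBra, ketBra_add_left, ketBra_add_right,
        add_kronecker, kronecker_add, ptr1_add, ptr2_add_s8, ptr3_add_s8, ptr1_smul, ptr2_smul,
        ptr3_smul, ptr1_ketBra_tens, ptr2_ketBra_tens, ptr3_ketBra_tens, h11, h22, h12, h21,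
        one_smul, zero_smul]
      module
  obtain ⟨hp1, hp2, hp3⟩ := hptr
  have hρ : IsDensityMatrix ρ₂ := hp3 ▸ IsDensityMatrix.ptr3 ⟨hRpsd, hRtr⟩
  exact ⟨hRpsd, hp1, hp2, hp3, hρ, R, hRpsd, hp1, hp2, hp3⟩

end BellPaper
end

section
/- Let ρ be a density matrix on ℂ^{d₁}⊗ℂ^{d₂} and T a source-operator of type T₁₂₂ for ρ with T ≠ 0, and set σ_T = tr^{(1)}[|T|] / ‖T‖₁, a density matrix on ℂ^{d₂}⊗ℂ^{d₂}. Then for all Hermitian matrices W₁ on ℂ^{d₁} and B₁, B₂ on ℂ^{d₂} with operator norms at most 1: |tr[ρ(W₁⊗B₁)] − tr[ρ(W₁⊗B₂)]| ≤ ‖T‖₁ · (1 − tr[σ_T (B₁⊗B₂)]). -/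
open Matrix
open scoped Kronecker ComplexOrder

namespace BellPaper

variable {α β γ : Type*} [Fintype α] [Fintype β] [Fintype γ]

/-!
Write `T = T⁺ - T⁻` with `T⁺, T⁻ ≥ 0` and `|T| = T⁺ + T⁻`. Since `ρ` is both `tr₂ T` and `tr₃ T`,
the left-hand side equals `|tr[T X]|` for `X = W₁⊗B₁⊗1 - W₁⊗1⊗B₂`. With `G = 1 - 1⊗B₁⊗B₂`, both
`G - X` and `G + X` are sums of tensor products of the positive operators `½(1 ± W₁)`, `1 ± B₁`,
`1 ± B₂`, so `-G ≤ X ≤ G`. Pairing with `T⁺` and `T⁻` gives `|tr[T X]| ≤ tr[|T| G]`, and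
`tr[|T| G] = ‖T‖₁ (1 - tr[σ_T (B₁⊗B₂)])` because `tr₁ |T| = ‖T‖₁ σ_T`.
-/

open scoped MatrixOrder

section PartialTrace

-- Summing over the traced-out factor first puts both sides in the same order.
lemma trace_ptr3_mul [DecidableEq γ] (T : Matrix ((α × β) × γ) ((α × β) × γ) ℂ)
    (M : Matrix (α × β) (α × β) ℂ) :
    (ptr3 T * M).trace = (T * (M ⊗ₖ (1 : Matrix γ γ ℂ))).trace := by
  simp [trace, mul_apply, ptr3, Fintype.sum_prod_type, Finset.sum_mul, one_apply,
    Finset.sum_comm (t := (Finset.univ : Finset γ))]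

lemma trace_ptr2_mul [DecidableEq β] (T : Matrix ((α × β) × γ) ((α × β) × γ) ℂ)
    (W : Matrix α α ℂ) (B : Matrix γ γ ℂ) :
    (ptr2 T * (W ⊗ₖ B)).trace = (T * ((W ⊗ₖ (1 : Matrix β β ℂ)) ⊗ₖ B)).trace := by
  simp [trace, mul_apply, ptr2, Fintype.sum_prod_type, Finset.sum_mul, one_apply,
    Finset.sum_comm (t := (Finset.univ : Finset β))]

lemma trace_ptr1_mul [DecidableEq α] (T : Matrix ((α × β) × γ) ((α × β) × γ) ℂ)
    (B₁ : Matrix β β ℂ) (B₂ : Matrix γ γ ℂ) :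
    (ptr1 T * (B₁ ⊗ₖ B₂)).trace = (T * (((1 : Matrix α α ℂ) ⊗ₖ B₁) ⊗ₖ B₂)).trace := by
  simp [trace, mul_apply, ptr1, Fintype.sum_prod_type, Finset.sum_mul, one_apply,
    Finset.sum_comm (t := (Finset.univ : Finset α))]

end PartialTrace

lemma _root_.Complex.norm_le_re_of_mem_Icc {z w : ℂ} (h : z ∈ Set.Icc (-w) w) : ‖z‖ ≤ w.re := by
  obtain ⟨⟨hre₁, him₁⟩, ⟨hre₂, him₂⟩⟩ := h
  simp only [Complex.neg_re, Complex.neg_im] at hre₁ him₁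
  rw [← Complex.abs_re_eq_norm.mpr (by linarith), abs_le]
  exact ⟨by linarith, hre₂⟩

section TraceInequalities

variable {n : Type*} [Fintype n] [DecidableEq n]

lemma trace_mul_nonneg {A B : Matrix n n ℂ} (hA : 0 ≤ A) (hB : 0 ≤ B) : 0 ≤ (A * B).trace := by
  obtain ⟨a, rfl⟩ := CStarAlgebra.nonneg_iff_eq_star_mul_self.mp hA
  rw [mul_assoc, trace_mul_comm]
  exact (hB.posSemidef.mul_mul_conjTranspose_same a).trace_nonneg

lemma trace_mul_mono {R X Y : Matrix n n ℂ} (hR : 0 ≤ R) (h : X ≤ Y) :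
    (R * X).trace ≤ (R * Y).trace := by
  simpa [mul_sub, trace_sub] using trace_mul_nonneg hR (sub_nonneg.mpr h)

lemma trace_sub_mul_mem_Icc {P Q X G : Matrix n n ℂ} (hP : 0 ≤ P) (hQ : 0 ≤ Q)
    (hX : X ∈ Set.Icc (-G) G) :
    ((P - Q) * X).trace ∈ Set.Icc (-((P + Q) * G).trace) ((P + Q) * G).trace := by
  have hPX := trace_mul_mono hP hX.2
  have hQX := trace_mul_mono hQ hX.2
  have hPX' := trace_mul_mono hP hX.1
  have hQX' := trace_mul_mono hQ hX.1
  simp only [mul_neg, trace_neg] at hPX' hQX'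
  rw [sub_mul, add_mul, trace_sub, trace_add]
  constructor
  · rw [neg_add']
    exact sub_le_sub hPX' hQX
  · simpa using sub_le_sub hPX hQX'

lemma norm_trace_mul_le {T X G : Matrix n n ℂ} (hT : T.IsHermitian) (hX : X ∈ Set.Icc (-G) G) :
    ‖(T * X).trace‖ ≤ (CFC.abs T * G).trace.re := by
  have h := trace_sub_mul_mem_Icc (CFC.posPart_nonneg T) (CFC.negPart_nonneg T) hX
  rw [CFC.posPart_sub_negPart T hT, CFC.posPart_add_negPart T hT] at h
  exact Complex.norm_le_re_of_mem_Icc h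

lemma re_trace_mul_one_sub {A : Matrix n n ℂ} (hA : A.PosSemidef) (K : Matrix n n ℂ) :
    A.trace.re * (1 - (A.trace⁻¹ * (A * K).trace).re) = (A * (1 - K)).trace.re := by
  rcases eq_or_ne A 0 with rfl | hA0
  · simp
  set r := A.trace.re
  have ht : A.trace = r := Complex.ext rfl (Complex.nonneg_iff.mp hA.trace_nonneg).2.symm
  have hr : r ≠ 0 := fun h ↦ hA0 (hA.trace_eq_zero_iff.mp (by rw [ht, h, Complex.ofReal_zero]))
  rw [Matrix.mul_sub, mul_one, trace_sub, ht, ← Complex.ofReal_inv, Complex.re_ofReal_mul,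
    Complex.sub_re, Complex.ofReal_re]
  field_simp

end TraceInequalities

section Contractions

variable {n : Type*} [DecidableEq n]

open scoped Matrix.Norms.L2Operator in
lemma mem_Icc_of_opNorm_le_one [Fintype n] {W : Matrix n n ℂ} (hW : W.IsHermitian)
    (h : opNorm W ≤ 1) : W ∈ Set.Icc (-1) 1 := by
  have h' : algebraMap ℝ (Matrix n n ℂ) ‖W‖ ≤ 1 := by
    rw [← map_one (algebraMap ℝ (Matrix n n ℂ))]
    exact algebraMap_mono _ h
  exact ⟨(neg_le_neg h').trans (IsSelfAdjoint.neg_algebraMap_norm_le_self hW),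
    (IsSelfAdjoint.le_algebraMap_norm_self hW).trans h'⟩

lemma posSemidef_one_add_and_one_sub {D : Matrix n n ℂ} (hD : D ∈ Set.Icc (-1) 1) :
    (1 + D).PosSemidef ∧ (1 - D).PosSemidef :=
  ⟨(neg_le_iff_add_nonneg'.mp hD.1).posSemidef, (sub_nonneg.mpr hD.2).posSemidef⟩

end Contractions

section BellOperator

variable {l m n : Type*} [Fintype l] [Fintype m] [Fintype n]
  [DecidableEq l] [DecidableEq m] [DecidableEq n]

lemma bell_operator_le {A : Matrix l l ℂ} {B : Matrix m m ℂ} {C : Matrix n n ℂ}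
    (hA : A ∈ Set.Icc (-1) 1) (hB : B ∈ Set.Icc (-1) 1) (hC : C ∈ Set.Icc (-1) 1) :
    (A ⊗ₖ B) ⊗ₖ 1 - (A ⊗ₖ 1) ⊗ₖ C ≤ 1 - (1 ⊗ₖ B) ⊗ₖ C := by
  have hsplit : 1 - (1 ⊗ₖ B) ⊗ₖ C - ((A ⊗ₖ B) ⊗ₖ 1 - (A ⊗ₖ 1) ⊗ₖ C)
      = (((2 : ℂ)⁻¹ • (1 + A)) ⊗ₖ (1 - B)) ⊗ₖ (1 + C)
        + (((2 : ℂ)⁻¹ • (1 - A)) ⊗ₖ (1 + B)) ⊗ₖ (1 - C) := by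
    rw [← one_kronecker_one, ← one_kronecker_one]
    ext ⟨⟨i, j⟩, k⟩ ⟨⟨i', j'⟩, k'⟩
    simp only [Matrix.sub_apply, Matrix.add_apply, Matrix.smul_apply, kroneckerMap_apply,
      smul_eq_mul]
    ring
  have hhalf : (0 : ℂ) ≤ 2⁻¹ := by positivity
  obtain ⟨hAp, hAm⟩ := posSemidef_one_add_and_one_sub hA
  obtain ⟨hBp, hBm⟩ := posSemidef_one_add_and_one_sub hB
  obtain ⟨hCp, hCm⟩ := posSemidef_one_add_and_one_sub hC
  rw [le_iff, hsplit]
  exact (((hAp.smul hhalf).kronecker hBm).kronecker hCp).add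
    (((hAm.smul hhalf).kronecker hBp).kronecker hCm)

lemma bell_operator_mem_Icc {A : Matrix l l ℂ} {B : Matrix m m ℂ} {C : Matrix n n ℂ}
    (hA : A ∈ Set.Icc (-1) 1) (hB : B ∈ Set.Icc (-1) 1) (hC : C ∈ Set.Icc (-1) 1) :
    (A ⊗ₖ B) ⊗ₖ 1 - (A ⊗ₖ 1) ⊗ₖ C ∈ Set.Icc (-(1 - (1 ⊗ₖ B) ⊗ₖ C)) (1 - (1 ⊗ₖ B) ⊗ₖ C) := by
  refine ⟨?_, bell_operator_le hA hB hC⟩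
  have hA' : -A ∈ Set.Icc (-1) 1 := ⟨neg_le_neg hA.2, neg_le.mp hA.1⟩
  have hneg : ((-A) ⊗ₖ B) ⊗ₖ 1 - ((-A) ⊗ₖ 1) ⊗ₖ C = -((A ⊗ₖ B) ⊗ₖ 1 - (A ⊗ₖ 1) ⊗ₖ C) := by
    ext
    simp only [Matrix.sub_apply, Matrix.neg_apply, kroneckerMap_apply]
    ring
  exact neg_le.mp (hneg ▸ bell_operator_le hA' hB hC)

end BellOperator

-- `Tabs` stands for `|T|`, so `Tabs.trace` is `‖T‖₁` and `(Tabs.trace)⁻¹ • ptr1 Tabs` is `σ_T`.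
theorem bell_form_inequality_122_general {d₁ d₂ : ℕ}
    (ρ : Matrix (Fin d₁ × Fin d₂) (Fin d₁ × Fin d₂) ℂ)
    (T Tabs : Matrix ((Fin d₁ × Fin d₂) × Fin d₂) ((Fin d₁ × Fin d₂) × Fin d₂) ℂ)
    (hT : IsSource122 ρ T)
    (habs : Tabs.PosSemidef ∧ Tabs * Tabs = T * T)
    (W₁ : Matrix (Fin d₁) (Fin d₁) ℂ) (B₁ B₂ : Matrix (Fin d₂) (Fin d₂) ℂ)
    (hW₁ : W₁.IsHermitian) (hB₁ : B₁.IsHermitian) (hB₂ : B₂.IsHermitian)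
    (hnW₁ : opNorm W₁ ≤ 1) (hnB₁ : opNorm B₁ ≤ 1) (hnB₂ : opNorm B₂ ≤ 1) :
    ‖(ρ * (W₁ ⊗ₖ B₁)).trace - (ρ * (W₁ ⊗ₖ B₂)).trace‖
      ≤ Tabs.trace.re *
        (1 - (((Tabs.trace)⁻¹ • ptr1 Tabs * (B₁ ⊗ₖ B₂)).trace).re) := by
  obtain ⟨hT, hρ₂, hρ₃⟩ := hT
  have hTabs : Tabs = CFC.abs T :=
    (CFC.sqrt_unique (by rw [habs.2, star_eq_conjTranspose, hT.eq]) habs.1.nonneg).symm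
  calc ‖(ρ * (W₁ ⊗ₖ B₁)).trace - (ρ * (W₁ ⊗ₖ B₂)).trace‖
      = ‖(T * ((W₁ ⊗ₖ B₁) ⊗ₖ 1 - (W₁ ⊗ₖ 1) ⊗ₖ B₂)).trace‖ := by
        nth_rw 1 [← hρ₃]
        rw [← hρ₂, trace_ptr3_mul, trace_ptr2_mul, Matrix.mul_sub, trace_sub]
    _ ≤ (CFC.abs T * (1 - (1 ⊗ₖ B₁) ⊗ₖ B₂)).trace.re :=
        norm_trace_mul_le hT <| bell_operator_mem_Icc (mem_Icc_of_opNorm_le_one hW₁ hnW₁)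
          (mem_Icc_of_opNorm_le_one hB₁ hnB₁) (mem_Icc_of_opNorm_le_one hB₂ hnB₂)
    _ = _ := by
        rw [← hTabs, ← re_trace_mul_one_sub habs.1, smul_mul_assoc, trace_smul, smul_eq_mul,
          trace_ptr1_mul]

/-- the quantum Bell-form inequality (20) with a source-operator of type
`T₁₂₂`. `Tabs` is the absolute value |T| (the PSD square root of T²), `Tabs.trace` the
trace norm ‖T‖₁ and `(Tabs.trace)⁻¹ • ptr1 Tabs` the density matrix `σ_T`. -/
theorem bell_form_inequality_122 {d₁ d₂ : ℕ}
    (ρ : Matrix (Fin d₁ × Fin d₂) (Fin d₁ × Fin d₂) ℂ) (hρ : IsDensityMatrix ρ)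
    (T Tabs : Matrix ((Fin d₁ × Fin d₂) × Fin d₂) ((Fin d₁ × Fin d₂) × Fin d₂) ℂ)
    (hT : IsSource122 ρ T) (hT0 : T ≠ 0)
    (habs : Tabs.PosSemidef ∧ Tabs * Tabs = T * T)
    (W₁ : Matrix (Fin d₁) (Fin d₁) ℂ) (B₁ B₂ : Matrix (Fin d₂) (Fin d₂) ℂ)
    (hW₁ : W₁.IsHermitian) (hB₁ : B₁.IsHermitian) (hB₂ : B₂.IsHermitian)
    (hnW₁ : opNorm W₁ ≤ 1) (hnB₁ : opNorm B₁ ≤ 1) (hnB₂ : opNorm B₂ ≤ 1) :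
    ‖(ρ * (W₁ ⊗ₖ B₁)).trace - (ρ * (W₁ ⊗ₖ B₂)).trace‖
      ≤ Tabs.trace.re *
        (1 - (((Tabs.trace)⁻¹ • ptr1 Tabs * (B₁ ⊗ₖ B₂)).trace).re) :=
  bell_form_inequality_122_general ρ T Tabs hT habs W₁ B₁ B₂ hW₁ hB₁ hB₂ hnW₁ hnB₁ hnB₂

end BellPaper
end

section
/- Let ρ be a density matrix on ℂ^{d₁}⊗ℂ^{d₂}, T a nonzero source-operator of type T₁₂₂ for ρ with σ_T = tr^{(1)}[|T|]/‖T‖₁, and S a nonzero source-operator of type T₁₁₂ for ρ with σ_S = tr^{(3)}[|S|]/‖S‖₁. Then for all Hermitian matrices A on ℂ^{d₁} and B on ℂ^{d₂} with operator norms at most 1: |tr[ρ(A⊗B)]| ≤ (1/2)·‖T‖₁·(1 + tr[σ_T (B⊗B)]) and |tr[ρ(A⊗B)]| ≤ (1/2)·‖S‖₁·(1 + tr[σ_S (A⊗A)]). -/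
/-!
For a Hermitian `T` with absolute value `|T|` one has `-|T| ≤ T ≤ |T|`, and for Hermitian
contractions `A`, `B` the operator `M = A ⊗ B ⊗ 1 + A ⊗ 1 ⊗ B` satisfies `-N ≤ M ≤ N` for
`N = 1 + 1 ⊗ B ⊗ B`: indeed `2 (N ± M)` is a sum of two tensor products of the positive operators
`1 ± A`, `1 ± B`. Since the trace pairing of positive operators is nonnegative,
`|tr (T M)| ≤ tr (|T| N)`. The partial-trace conditions turn `tr (T M)` into `2 tr (ρ (A ⊗ B))`
and `tr (|T| N)` into `‖T‖₁ (1 + tr (σ_T (B ⊗ B)))`. The bound for `S` is the same argument with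
`M = A ⊗ 1 ⊗ B + 1 ⊗ A ⊗ B` and `N = 1 + A ⊗ A ⊗ 1`.
-/

open Matrix
open scoped Kronecker ComplexOrder

section CStarAlgebra

variable {A : Type*} [CStarAlgebra A] [PartialOrder A] [StarOrderedRing A]

lemma IsSelfAdjoint.mem_Icc_neg_one_one_of_norm_le_one {a : A} (ha : IsSelfAdjoint a)
    (h : ‖a‖ ≤ 1) : a ∈ Set.Icc (-1) 1 := by
  have hle : algebraMap ℝ A ‖a‖ ≤ 1 := by simpa using algebraMap_mono A h
  exact ⟨(neg_le_neg hle).trans ha.neg_algebraMap_norm_le_self,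
    ha.le_algebraMap_norm_self.trans hle⟩

lemma IsSelfAdjoint.mem_Icc_of_mul_self_eq {a b : A} (ha : IsSelfAdjoint a) (hb : 0 ≤ b)
    (h : b * b = a * a) : a ∈ Set.Icc (-b) b := by
  -- `b` is the square root of `star a * a`, i.e. `|a|`, and `|a| ± a = 2 a^±`
  obtain rfl : CFC.abs a = b := by
    rw [CFC.abs, CFC.sqrt_eq_iff _ _ (star_mul_self_nonneg a) hb, h, ha.star_eq]
  rw [Set.mem_Icc, neg_le_iff_add_nonneg', ← sub_nonneg (b := a), CFC.abs_add_self a,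
    CFC.abs_sub_self a]
  exact ⟨smul_nonneg zero_le_two (CFC.posPart_nonneg a),
    smul_nonneg zero_le_two (CFC.negPart_nonneg a)⟩

end CStarAlgebra

lemma Set.mem_Icc_neg_iff {G : Type*} [AddCommGroup G] [PartialOrder G] [IsOrderedAddMonoid G]
    {a b : G} : a ∈ Set.Icc (-b) b ↔ 0 ≤ b + a ∧ 0 ≤ b - a := by
  rw [Set.mem_Icc, neg_le_iff_add_nonneg', sub_nonneg]

namespace Complex

lemma norm_le_re_of_mem_Icc_s11 {z w : ℂ} (h : z ∈ Set.Icc (-w) w) : ‖z‖ ≤ w.re := by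
  obtain ⟨h₁, h₂⟩ := h
  rw [le_def] at h₁ h₂
  simp only [neg_re, neg_im] at h₁
  rw [← abs_re_eq_norm.mpr (by linarith [h₁.2, h₂.2])]
  exact abs_le.mpr ⟨by linarith [h₁.1], h₂.1⟩

lemma re_mul_one_add_re_inv_mul {t y : ℂ} (ht : 0 ≤ t) (hy : t = 0 → y = 0) :
    t.re * (1 + (t⁻¹ * y).re) = (t + y).re := by
  obtain ⟨hr, him⟩ := nonneg_iff.mp ht
  obtain ⟨r, rfl⟩ : ∃ r : ℝ, t = r := ⟨t.re, ext rfl (by simp [← him])⟩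
  rcases (ofReal_re r ▸ hr).eq_or_lt with rfl | hr
  · simp [hy]
  · simp only [ofReal_re, add_re, ← ofReal_inv, re_ofReal_mul]
    field_simp

end Complex

namespace Matrix

variable {l m n p : Type*}

section Kronecker

variable {R : Type*} [NonUnitalNonAssocRing R]

lemma neg_kronecker (A : Matrix l m R) (B : Matrix n p R) : (-A) ⊗ₖ B = -(A ⊗ₖ B) := by
  ext; simp [neg_mul]

lemma kronecker_neg (A : Matrix l m R) (B : Matrix n p R) : A ⊗ₖ (-B) = -(A ⊗ₖ B) := by
  ext; simp [mul_neg]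

lemma sub_kronecker (A₁ A₂ : Matrix l m R) (B : Matrix n p R) :
    (A₁ - A₂) ⊗ₖ B = A₁ ⊗ₖ B - A₂ ⊗ₖ B := by
  ext; simp [sub_mul]

lemma kronecker_sub (A : Matrix l m R) (B₁ B₂ : Matrix n p R) :
    A ⊗ₖ (B₁ - B₂) = A ⊗ₖ B₁ - A ⊗ₖ B₂ := by
  ext; simp [mul_sub]

end Kronecker

open scoped MatrixOrder Matrix.Norms.L2Operator

lemma trace_mul_nonneg [Fintype n] [DecidableEq n] {P Q : Matrix n n ℂ} (hP : 0 ≤ P)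
    (hQ : 0 ≤ Q) : 0 ≤ (P * Q).trace := by
  obtain ⟨C, rfl⟩ := CStarAlgebra.nonneg_iff_eq_star_mul_self.mp hQ
  rw [star_eq_conjTranspose, ← Matrix.mul_assoc, trace_mul_cycle]
  exact (hP.posSemidef.mul_mul_conjTranspose_same C).trace_nonneg

lemma norm_trace_mul_le_of_mem_Icc [Fintype n] [DecidableEq n] {T P M N : Matrix n n ℂ}
    (hT : T ∈ Set.Icc (-P) P) (hM : M ∈ Set.Icc (-N) N) : ‖(T * M).trace‖ ≤ (P * N).trace.re := by
  rw [Set.mem_Icc_neg_iff] at hT hM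
  apply Complex.norm_le_re_of_mem_Icc_s11
  rw [Set.mem_Icc_neg_iff]
  -- expand `tr((P ± T)(N ± M))`: the mixed terms cancel in pairs
  constructor
  · have h := add_nonneg (trace_mul_nonneg hT.1 hM.1) (trace_mul_nonneg hT.2 hM.2)
    convert mul_nonneg (by positivity : (0 : ℂ) ≤ 2⁻¹) h using 1
    simp only [add_mul, mul_add, sub_mul, mul_sub, trace_add, trace_sub]
    ring
  · have h := add_nonneg (trace_mul_nonneg hT.1 hM.2) (trace_mul_nonneg hT.2 hM.1)
    convert mul_nonneg (by positivity : (0 : ℂ) ≤ 2⁻¹) h using 1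
    simp only [add_mul, mul_add, sub_mul, mul_sub, trace_add, trace_sub]
    ring

variable {α β γ : Type*} [Fintype α] [Fintype β] [Fintype γ]
  [DecidableEq α] [DecidableEq β] [DecidableEq γ]

lemma one_add_pairwise_kronecker_nonneg {X : Matrix α α ℂ} {Y : Matrix β β ℂ}
    {Z : Matrix γ γ ℂ} (hX : X ∈ Set.Icc (-1) 1) (hY : Y ∈ Set.Icc (-1) 1)
    (hZ : Z ∈ Set.Icc (-1) 1) :
    0 ≤ 1 + (X ⊗ₖ Y) ⊗ₖ 1 + (X ⊗ₖ 1) ⊗ₖ Z + (1 ⊗ₖ Y) ⊗ₖ Z := by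
  obtain ⟨hXp, hXm⟩ := Set.mem_Icc_neg_iff.mp hX
  obtain ⟨hYp, hYm⟩ := Set.mem_Icc_neg_iff.mp hY
  obtain ⟨hZp, hZm⟩ := Set.mem_Icc_neg_iff.mp hZ
  have h : 1 + (X ⊗ₖ Y) ⊗ₖ 1 + (X ⊗ₖ 1) ⊗ₖ Z + (1 ⊗ₖ Y) ⊗ₖ Z
      = (2⁻¹ : ℝ) • ((1 + X) ⊗ₖ (1 + Y) ⊗ₖ (1 + Z) + (1 - X) ⊗ₖ (1 - Y) ⊗ₖ (1 - Z)) := by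
    simp only [add_kronecker, kronecker_add, sub_kronecker, kronecker_sub, one_kronecker_one]
    module
  rw [h]
  refine smul_nonneg (by norm_num) (add_nonneg ?_ ?_)
  · exact ((hXp.posSemidef.kronecker hYp.posSemidef).kronecker hZp.posSemidef).nonneg
  · exact ((hXm.posSemidef.kronecker hYm.posSemidef).kronecker hZm.posSemidef).nonneg

lemma kronecker_first_mem_Icc {X : Matrix α α ℂ} {Y : Matrix β β ℂ} {Z : Matrix γ γ ℂ}
    (hX : X ∈ Set.Icc (-1) 1) (hY : Y ∈ Set.Icc (-1) 1) (hZ : Z ∈ Set.Icc (-1) 1) :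
    (X ⊗ₖ Y) ⊗ₖ 1 + (X ⊗ₖ 1) ⊗ₖ Z ∈ Set.Icc (-(1 + (1 ⊗ₖ Y) ⊗ₖ Z)) (1 + (1 ⊗ₖ Y) ⊗ₖ Z) := by
  have hX' : -X ∈ Set.Icc (-1) 1 := ⟨neg_le_neg hX.2, by simpa using neg_le_neg hX.1⟩
  rw [Set.mem_Icc_neg_iff]
  constructor
  · convert one_add_pairwise_kronecker_nonneg hX hY hZ using 1
    abel
  · convert one_add_pairwise_kronecker_nonneg hX' hY hZ using 1
    simp only [neg_kronecker]
    abel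

lemma kronecker_last_mem_Icc {X : Matrix α α ℂ} {Y : Matrix β β ℂ} {Z : Matrix γ γ ℂ}
    (hX : X ∈ Set.Icc (-1) 1) (hY : Y ∈ Set.Icc (-1) 1) (hZ : Z ∈ Set.Icc (-1) 1) :
    (X ⊗ₖ 1) ⊗ₖ Z + (1 ⊗ₖ Y) ⊗ₖ Z ∈ Set.Icc (-(1 + (X ⊗ₖ Y) ⊗ₖ 1)) (1 + (X ⊗ₖ Y) ⊗ₖ 1) := by
  have hZ' : -Z ∈ Set.Icc (-1) 1 := ⟨neg_le_neg hZ.2, by simpa using neg_le_neg hZ.1⟩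
  rw [Set.mem_Icc_neg_iff]
  constructor
  · convert one_add_pairwise_kronecker_nonneg hX hY hZ using 1
    abel
  · convert one_add_pairwise_kronecker_nonneg hX hY hZ' using 1
    simp only [kronecker_neg]
    abel

end Matrix

namespace BellPaper

variable {α β γ : Type*} [Fintype α] [Fintype β] [Fintype γ]

lemma trace_mul_kronecker_one [DecidableEq γ] (X : Matrix ((α × β) × γ) ((α × β) × γ) ℂ)
    (W : Matrix (α × β) (α × β) ℂ) :
    (X * (W ⊗ₖ (1 : Matrix γ γ ℂ))).trace = (ptr3 X * W).trace := by
  simp only [trace, diag_apply, Matrix.mul_apply, kroneckerMap_apply, one_apply, mul_ite, mul_one,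
    mul_zero, Fintype.sum_prod_type, Finset.sum_ite_eq', Finset.mem_univ, ↓reduceIte, ptr3,
    Finset.sum_mul]
  refine Finset.sum_congr rfl fun _ _ => Finset.sum_congr rfl fun _ _ => ?_
  rw [Finset.sum_comm]
  exact Finset.sum_congr rfl fun _ _ => Finset.sum_comm

lemma trace_mul_kronecker_one_kronecker [DecidableEq β]
    (X : Matrix ((α × β) × γ) ((α × β) × γ) ℂ) (A : Matrix α α ℂ) (C : Matrix γ γ ℂ) :
    (X * ((A ⊗ₖ (1 : Matrix β β ℂ)) ⊗ₖ C)).trace = (ptr2 X * (A ⊗ₖ C)).trace := by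
  simp only [trace, diag_apply, Matrix.mul_apply, kroneckerMap_apply, one_apply, mul_ite, mul_one,
    mul_zero, ite_mul, zero_mul, Fintype.sum_prod_type, Finset.sum_ite_irrel, Finset.sum_const_zero,
    Finset.sum_ite_eq', Finset.mem_univ, ↓reduceIte, ptr2, Finset.sum_mul]
  refine Finset.sum_congr rfl fun _ _ => ?_
  rw [Finset.sum_comm]
  refine Finset.sum_congr rfl fun _ _ => ?_
  rw [Finset.sum_comm]
  exact Finset.sum_congr rfl fun _ _ => Finset.sum_comm

lemma trace_mul_one_kronecker_kronecker [DecidableEq α]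
    (X : Matrix ((α × β) × γ) ((α × β) × γ) ℂ) (B : Matrix β β ℂ) (C : Matrix γ γ ℂ) :
    (X * (((1 : Matrix α α ℂ) ⊗ₖ B) ⊗ₖ C)).trace = (ptr1 X * (B ⊗ₖ C)).trace := by
  simp only [trace, diag_apply, Matrix.mul_apply, kroneckerMap_apply, one_apply, ite_mul, one_mul,
    zero_mul, mul_ite, mul_zero, Fintype.sum_prod_type, Finset.sum_ite_irrel, Finset.sum_const_zero,
    Finset.sum_ite_eq', Finset.mem_univ, ↓reduceIte, ptr1, Finset.sum_mul]
  rw [Finset.sum_comm]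
  refine Finset.sum_congr rfl fun _ _ => ?_
  rw [Finset.sum_comm]
  refine Finset.sum_congr rfl fun _ _ => ?_
  rw [Finset.sum_comm]
  exact Finset.sum_congr rfl fun _ _ => Finset.sum_comm

lemma norm_le_half_re_trace_mul_one_add {n m : Type*} [Fintype n] [Fintype m] {P : Matrix n n ℂ}
    (hP : P.PosSemidef) (Y : Matrix m m ℂ) (hY : P = 0 → Y = 0) (K : Matrix m m ℂ) {z : ℂ}
    (h : ‖2 * z‖ ≤ (P.trace + (Y * K).trace).re) :
    ‖z‖ ≤ 1 / 2 * P.trace.re * (1 + ((P.trace⁻¹ • Y * K).trace).re) := by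
  have hY' : P.trace = 0 → (Y * K).trace = 0 := fun h0 => by
    simp [hY (hP.trace_eq_zero_iff.mp h0)]
  rw [Matrix.smul_mul, trace_smul, smul_eq_mul, mul_assoc,
    Complex.re_mul_one_add_re_inv_mul hP.trace_nonneg hY']
  rw [norm_mul, Complex.norm_two] at h
  linarith

section LoewnerOrder

open scoped MatrixOrder

lemma mem_Icc_neg_one_one_of_opNorm_le_one {n : Type*} [Fintype n] [DecidableEq n]
    {A : Matrix n n ℂ} (hA : A.IsHermitian) (h : opNorm A ≤ 1) : A ∈ Set.Icc (-1) 1 :=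
  open scoped Matrix.Norms.L2Operator in hA.isSelfAdjoint.mem_Icc_neg_one_one_of_norm_le_one h

lemma _root_.Matrix.IsHermitian.mem_Icc_of_mul_self_eq {n : Type*} [Fintype n] [DecidableEq n]
    {T P : Matrix n n ℂ} (hT : T.IsHermitian) (hP : P.PosSemidef) (h : P * P = T * T) :
    T ∈ Set.Icc (-P) P :=
  open scoped Matrix.Norms.L2Operator in hT.isSelfAdjoint.mem_Icc_of_mul_self_eq hP.nonneg h

variable {d₁ d₂ : ℕ} {ρ : Matrix (Fin d₁ × Fin d₂) (Fin d₁ × Fin d₂) ℂ}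
  {A : Matrix (Fin d₁) (Fin d₁) ℂ} {B : Matrix (Fin d₂) (Fin d₂) ℂ}

lemma IsSource122.norm_trace_mul_kronecker_le
    {T P : Matrix ((Fin d₁ × Fin d₂) × Fin d₂) ((Fin d₁ × Fin d₂) × Fin d₂) ℂ}
    (hT : IsSource122 ρ T) (hP : P.PosSemidef) (hTP : T ∈ Set.Icc (-P) P)
    (hA : A ∈ Set.Icc (-1) 1) (hB : B ∈ Set.Icc (-1) 1) :
    ‖(ρ * (A ⊗ₖ B)).trace‖
      ≤ (1 / 2) * P.trace.re * (1 + (((P.trace)⁻¹ • ptr1 P * (B ⊗ₖ B)).trace).re) := by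
  have key := norm_trace_mul_le_of_mem_Icc hTP (kronecker_first_mem_Icc hA hB hB)
  rw [mul_add, trace_add, trace_mul_kronecker_one, trace_mul_kronecker_one_kronecker, hT.2.1,
    hT.2.2, ← two_mul, mul_add, trace_add, Matrix.mul_one, trace_mul_one_kronecker_kronecker] at key
  exact norm_le_half_re_trace_mul_one_add hP _ (fun h => by ext; simp [h, ptr1]) _ key

lemma IsSource112.norm_trace_mul_kronecker_le
    {S P : Matrix ((Fin d₁ × Fin d₁) × Fin d₂) ((Fin d₁ × Fin d₁) × Fin d₂) ℂ}
    (hS : IsSource112 ρ S) (hP : P.PosSemidef) (hSP : S ∈ Set.Icc (-P) P)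
    (hA : A ∈ Set.Icc (-1) 1) (hB : B ∈ Set.Icc (-1) 1) :
    ‖(ρ * (A ⊗ₖ B)).trace‖
      ≤ (1 / 2) * P.trace.re * (1 + (((P.trace)⁻¹ • ptr3 P * (A ⊗ₖ A)).trace).re) := by
  have key := norm_trace_mul_le_of_mem_Icc hSP (kronecker_last_mem_Icc hA hA hB)
  rw [mul_add, trace_add, trace_mul_kronecker_one_kronecker, trace_mul_one_kronecker_kronecker,
    hS.2.1, hS.2.2, ← two_mul, mul_add, trace_add, Matrix.mul_one,
    trace_mul_kronecker_one] at key
  exact norm_le_half_re_trace_mul_one_add hP _ (fun h => by ext; simp [h, ptr3]) _ key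

end LoewnerOrder

theorem single_product_bounds_general {d₁ d₂ : ℕ}
    (ρ : Matrix (Fin d₁ × Fin d₂) (Fin d₁ × Fin d₂) ℂ)
    (T Tabs : Matrix ((Fin d₁ × Fin d₂) × Fin d₂) ((Fin d₁ × Fin d₂) × Fin d₂) ℂ)
    (hT : IsSource122 ρ T)
    (hTabs : Tabs.PosSemidef ∧ Tabs * Tabs = T * T)
    (S Sabs : Matrix ((Fin d₁ × Fin d₁) × Fin d₂) ((Fin d₁ × Fin d₁) × Fin d₂) ℂ)
    (hS : IsSource112 ρ S)
    (hSabs : Sabs.PosSemidef ∧ Sabs * Sabs = S * S)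
    (A : Matrix (Fin d₁) (Fin d₁) ℂ) (B : Matrix (Fin d₂) (Fin d₂) ℂ)
    (hA : A.IsHermitian) (hB : B.IsHermitian)
    (hnA : opNorm A ≤ 1) (hnB : opNorm B ≤ 1) :
    ‖(ρ * (A ⊗ₖ B)).trace‖
      ≤ (1 / 2) * Tabs.trace.re *
        (1 + (((Tabs.trace)⁻¹ • ptr1 Tabs * (B ⊗ₖ B)).trace).re)
    ∧ ‖(ρ * (A ⊗ₖ B)).trace‖
      ≤ (1 / 2) * Sabs.trace.re *
        (1 + (((Sabs.trace)⁻¹ • ptr3 Sabs * (A ⊗ₖ A)).trace).re) := by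
  have hA₁ := mem_Icc_neg_one_one_of_opNorm_le_one hA hnA
  have hB₁ := mem_Icc_neg_one_one_of_opNorm_le_one hB hnB
  have hTabs' := hT.1.mem_Icc_of_mul_self_eq hTabs.1 hTabs.2
  have hSabs' := hS.1.mem_Icc_of_mul_self_eq hSabs.1 hSabs.2
  exact ⟨hT.norm_trace_mul_kronecker_le hTabs.1 hTabs' hA₁ hB₁,
    hS.norm_trace_mul_kronecker_le hSabs.1 hSabs' hA₁ hB₁⟩

/-- the upper bounds (33) for a single product average, in terms of
source-operators of both types. -/
theorem single_product_bounds {d₁ d₂ : ℕ}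
    (ρ : Matrix (Fin d₁ × Fin d₂) (Fin d₁ × Fin d₂) ℂ) (hρ : IsDensityMatrix ρ)
    (T Tabs : Matrix ((Fin d₁ × Fin d₂) × Fin d₂) ((Fin d₁ × Fin d₂) × Fin d₂) ℂ)
    (hT : IsSource122 ρ T) (hT0 : T ≠ 0)
    (hTabs : Tabs.PosSemidef ∧ Tabs * Tabs = T * T)
    (S Sabs : Matrix ((Fin d₁ × Fin d₁) × Fin d₂) ((Fin d₁ × Fin d₁) × Fin d₂) ℂ)
    (hS : IsSource112 ρ S) (hS0 : S ≠ 0)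
    (hSabs : Sabs.PosSemidef ∧ Sabs * Sabs = S * S)
    (A : Matrix (Fin d₁) (Fin d₁) ℂ) (B : Matrix (Fin d₂) (Fin d₂) ℂ)
    (hA : A.IsHermitian) (hB : B.IsHermitian)
    (hnA : opNorm A ≤ 1) (hnB : opNorm B ≤ 1) :
    ‖(ρ * (A ⊗ₖ B)).trace‖
      ≤ (1 / 2) * Tabs.trace.re *
        (1 + (((Tabs.trace)⁻¹ • ptr1 Tabs * (B ⊗ₖ B)).trace).re)
    ∧ ‖(ρ * (A ⊗ₖ B)).trace‖
      ≤ (1 / 2) * Sabs.trace.re *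
        (1 + (((Sabs.trace)⁻¹ • ptr3 Sabs * (A ⊗ₖ A)).trace).re) :=
  single_product_bounds_general ρ T Tabs hT hTabs S Sabs hS hSabs A B hA hB hnA hnB

end BellPaper
end
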